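/- Let M be an m×m matrix over a commutative ring with entries M_{ij} = c_i + t·B_{ij}, where c is a column vector, t a scalar, and B an m×m matrix. Then det M = t^m · det B + t^{m-1} · Σ_{j=1}^m det B^j, where B^j is the matrix obtained from B by replacing its j-th column with the column vector c. -/

import Mathlib

/-!
Write each column of `M` as `c + t • Bⱼ` and expand the determinant multilinearly in the columns.
A term that takes `c` in two or more columns has two equal columns and vanishes, so only the term
`det (t • B)` and the `m` terms with `c` in exactly one column survive.
-/

open Matrix BigOperators

theorem Finset.sum_univ_finset_of_one_lt_card_eq_zero {ι M : Type*} [Fintype ι] [DecidableEq ι]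
    [AddCommMonoid M] (F : Finset ι → M) (hF : ∀ S : Finset ι, 1 < S.card → F S = 0) :
    ∑ S : Finset ι, F S = F ∅ + ∑ i, F {i} := by
  set small : Finset (Finset ι) := insert ∅ (univ.map ⟨_, singleton_injective⟩)
  have h_small : ∀ S ∉ small, F S = 0 := fun S hS => hF S <| by
    by_contra! hcard
    rcases Nat.le_one_iff_eq_zero_or_eq_one.mp hcard with h | h
    · simp [small, card_eq_zero.mp h] at hS
    · obtain ⟨x, rfl⟩ := card_eq_one.mp h
      simp [small] at hS
  rw [← sum_subset (subset_univ small) fun S _ hS => h_small S hS,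
    sum_insert (by simp), sum_map]
  rfl

theorem AlternatingMap.map_const_add {R M N ι : Type*} [CommSemiring R] [AddCommMonoid M]
    [Module R M] [AddCommMonoid N] [Module R N] [Fintype ι] [DecidableEq ι]
    (f : M [⋀^ι]→ₗ[R] N) (v : M) (w : ι → M) :
    f (fun i => v + w i) = f w + ∑ i, f (Function.update w i v) := by
  have h_two : ∀ S : Finset ι, 1 < S.card → f (S.piecewise (fun _ => v) w) = 0 := by
    intro S hS
    obtain ⟨a, ha, b, hb, hab⟩ := Finset.one_lt_card.mp hS
    exact f.map_eq_zero_of_eq _ (by simp [ha, hb]) hab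
  rw [show (fun i => v + w i) = (fun _ => v) + w from rfl,
    f.map_add_univ, Finset.sum_univ_finset_of_one_lt_card_eq_zero _ h_two]
  simp [Finset.piecewise_singleton]

theorem Matrix.det_replicateCol_add {n R : Type*} [Fintype n] [DecidableEq n] [CommRing R]
    (A : Matrix n n R) (c : n → R) :
    det (replicateCol n c + A) = det A + ∑ j, det (A.updateCol j c) := by
  calc det (replicateCol n c + A)
      = det (replicateRow n c + Aᵀ) := by
        rw [← det_transpose, transpose_add, transpose_replicateCol]
    _ = det Aᵀ + ∑ j, det (Aᵀ.updateRow j c) := detRowAlternating.map_const_add c Aᵀ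
    _ = det A + ∑ j, det (A.updateCol j c) := by
        simp only [updateRow_transpose, det_transpose]

theorem det_col_plus_smul {R : Type*} [CommRing R] {m : ℕ}
    (B : Matrix (Fin m) (Fin m) R) (c : Fin m → R) (t : R)
    (M : Matrix (Fin m) (Fin m) R) (hM : ∀ i j, M i j = c i + t * B i j) :
    M.det = t ^ m * B.det + t ^ (m - 1) * ∑ j : Fin m, (B.updateCol j c).det := by
  have hM_eq : M = replicateCol (Fin m) c + t • B := by
    ext i j
    simp [hM]
  rw [hM_eq, det_replicateCol_add, det_smul, Fintype.card_fin, Finset.mul_sum]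
  simp_rw [det_updateCol_smul_left, Fintype.card_fin]
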